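/- The Loday–Ronco map via the decreasing encoding: for every n ≥ 1 and every π ∈ S_n, ψ(π) = ε(f(π)), where ψ is the Loday–Ronco map (defined recursively by splitting at the maximal entry) and f is the decreasing encoding. -/

import Mathlib

/-- Indexed terms of the language `L^I`: generators `2^k` and partial compositions. -/
inductive Trm : Type
  | gen : ℕ → Trm
  | comp : Trm → ℕ → Trm → Trm
deriving DecidableEq

namespace Trm

/-- Arity `|A|`. -/
def arity : Trm → ℕ
  | gen _ => 2
  | comp A _ B => A.arity + B.arity - 1

/-- Set of indices occurring in a term. -/
def ind : Trm → Finset ℕ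
  | gen k => {k}
  | comp A _ B => A.ind ∪ B.ind

/-- Root index. -/
def root : Trm → ℕ
  | gen k => k
  | comp A _ _ => A.root

/-- Number of occurrences of the generator. -/
def countGen : Trm → ℕ
  | gen _ => 1
  | comp A _ B => A.countGen + B.countGen

end Trm

/-- The congruence `=_I` generated by (assoc1) and (assoc2). -/
inductive IEq : Trm → Trm → Prop
  | refl (A : Trm) : IEq A A
  | symm {A B} : IEq A B → IEq B A
  | trans {A B C} : IEq A B → IEq B C → IEq A C
  | congr {A A' B B'} (n : ℕ) : IEq A A' → IEq B B' →
      IEq (Trm.comp A n B) (Trm.comp A' n B')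
  | assoc1 (A B C : Trm) (n m : ℕ) : n ≤ m → m < n + B.arity →
      IEq (Trm.comp (Trm.comp A n B) m C) (Trm.comp A n (Trm.comp B (m - n + 1) C))
  | assoc2 (A B C : Trm) (n m : ℕ) : n + B.arity ≤ m →
      IEq (Trm.comp (Trm.comp A n B) m C) (Trm.comp (Trm.comp A (m - B.arity + 1) C) n B)

/-- Planar binary trees. -/
inductive BT : Type
  | leaf : BT
  | node : BT → BT → BT
deriving DecidableEq

namespace BT

/-- Number of leaves. -/
def leaves : BT → ℕ
  | leaf => 1
  | node l r => l.leaves + r.leaves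

/-- Graft `S` at the `i`-th leaf (1-indexed) of a tree. -/
def graft : BT → ℕ → BT → BT
  | leaf, _, S => S
  | node l r, i, S =>
    if i ≤ l.leaves then node (l.graft i S) r else node l (r.graft (i - l.leaves) S)

end BT

/-- Evaluation `ε` of indexed terms to planar binary trees. -/
def Trm.eval : Trm → BT
  | Trm.gen _ => BT.node BT.leaf BT.leaf
  | Trm.comp A i B => A.eval.graft i B.eval

/-- `l`-factors. -/
inductive LFactor : Trm → Prop
  | gen (k : ℕ) : LFactor (Trm.gen k)
  | step {A : Trm} (j : ℕ) : LFactor A → j ∉ A.ind →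
      LFactor (Trm.comp A ((A.ind.filter (· < j)).card + 1) (Trm.gen j))

/-- Auxiliary for the head-insertion encoding: `done` is the list of already
inserted letters. -/
def hAux : Trm → List ℕ → List ℕ → Trm
  | A, _, [] => A
  | A, done, y :: rest =>
      hAux (Trm.comp A ((done.filter (· < y)).length + 1) (Trm.gen y)) (done ++ [y]) rest

/-- Head-insertion encoding `h` (junk value on the empty word). -/
def hWord : List ℕ → Trm
  | [] => Trm.gen 0
  | x :: rest => hAux (Trm.gen x) [x] rest

/-- `u_a(x)`: number of letters to the left of `x` in `a` that are greater than `x`. -/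
def uCount (a : List ℕ) (x : ℕ) : ℕ := ((a.takeWhile (· ≠ x)).filter (x < ·)).length

/-- Decreasing rearrangement of a word. -/
def sortDesc (a : List ℕ) : List ℕ := (a.mergeSort (· ≤ ·)).reverse

/-- Decreasing encoding `f` (junk value on the empty word). -/
def fWord (a : List ℕ) : Trm :=
  match sortDesc a with
  | [] => Trm.gen 0
  | k :: rest => rest.foldl (fun A x => Trm.comp A (uCount a x + 1) (Trm.gen x)) (Trm.gen k)

/-- Standardization of a word of distinct integers. -/
def std (a : List ℕ) : List ℕ := a.map (fun x => (a.filter (· ≤ x)).length)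

/-- Tonks' vertex map, splitting form `φ`. -/
def tonksPhi (a : List ℕ) : BT :=
  match ha : a.getLast? with
  | none => BT.leaf
  | some x =>
      BT.node (tonksPhi (std (a.filter (· < x)))) (tonksPhi (std (a.filter (x < ·))))
termination_by a.length
decreasing_by
  · have hx : x ∈ a := List.mem_of_mem_getLast? (Option.mem_def.mpr ha)
    have : (a.filter (· < x)).length < a.length := by
      apply List.length_filter_lt_length_iff_exists.2
      exact ⟨x, hx, by simp⟩
    simp only [std, List.length_map, List.length_unattach]
    exact lt_of_lt_of_eq (List.length_filter_lt_length_iff_exists.2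
      ⟨⟨x, hx⟩, List.mem_attach _ _, by simp⟩) List.length_attach
  · have hx : x ∈ a := List.mem_of_mem_getLast? (Option.mem_def.mpr ha)
    have : (a.filter (x < ·)).length < a.length := by
      apply List.length_filter_lt_length_iff_exists.2
      exact ⟨x, hx, by simp⟩
    simp only [std, List.length_map, List.length_unattach]
    exact lt_of_lt_of_eq (List.length_filter_lt_length_iff_exists.2
      ⟨⟨x, hx⟩, List.mem_attach _ _, by simp⟩) List.length_attach

/-- Tonks' vertex map, head-grafting form `φ̂`. -/
def phiHat : List ℕ → BT
  | [] => BT.leaf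
  | x :: rest => (phiHat (std rest)).graft x (BT.node BT.leaf BT.leaf)
termination_by a => a.length
decreasing_by
  simp [std]

/-- The Loday–Ronco map `ψ`. -/
def lodayPsi (a : List ℕ) : BT :=
  match hm : a.maximum with
  | none => BT.leaf
  | some m =>
      let i := a.idxOf m
      BT.node (lodayPsi (std (a.take i))) (lodayPsi (std (a.drop (i + 1))))
termination_by a.length
decreasing_by
  · have hmem : m ∈ a := List.maximum_mem hm
    have hi : a.idxOf m < a.length := List.idxOf_lt_length_of_mem hmem
    simp only [std, List.length_map, List.length_take]
    omega
  · have : a ≠ [] := by rintro rfl; simp [List.maximum] at hm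
    have : 0 < a.length := List.length_pos_iff.2 this
    simp only [std, List.length_map, List.length_drop]
    omega

/-- Inverse of a permutation word on `{1,…,n}`. -/
def invWord (π : List ℕ) : List ℕ :=
  (List.range π.length).map (fun j => π.idxOf (j + 1) + 1)

/-- One Tamari (right rotation) step, at any subtree. -/
inductive TamariStep : BT → BT → Prop
  | rot (X Y Z : BT) : TamariStep (BT.node (BT.node X Y) Z) (BT.node X (BT.node Y Z))
  | left {l l'} (r : BT) : TamariStep l l' → TamariStep (BT.node l r) (BT.node l' r)
  | right (l : BT) {r r'} : TamariStep r r' → TamariStep (BT.node l r) (BT.node l r')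

/-- The Tamari order. -/
def TamariLE : BT → BT → Prop := Relation.ReflTransGen TamariStep

/-- The strict Tamari order. -/
def TamariLT : BT → BT → Prop := Relation.TransGen TamariStep

/-- One cover of the right weak Bruhat order on words. -/
inductive BruhatStep : List ℕ → List ℕ → Prop
  | swap (α : List ℕ) {u v : ℕ} (β : List ℕ) : u < v →
      BruhatStep (α ++ u :: v :: β) (α ++ v :: u :: β)

/-- The right weak Bruhat order on words. -/
def BruhatLE : List ℕ → List ℕ → Prop := Relation.ReflTransGen BruhatStep

/-- Head-insertion index `k(a; σ)`. -/
def kIdx (a : ℕ) (σ : List ℕ) : ℕ := 1 + (σ.filter (· < a)).length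


/-! Both sides can be peeled off at the minimal letter `m` of the word `a`. Since `m` is minimal,
`u_a(m)` is its position in `a`, and `m` is a cherry of `ψ(a)` hanging in that gap, so `ψ(a)` is
`ψ(a ∖ m)` with a cherry grafted at leaf `u_a(m) + 1`; this is proved by induction along the
splitting `a = α M β` at the maximum, once standardization is seen not to change `ψ`. On the other
side `m` is the last letter in decreasing order and erasing it changes no other `u_a(x)`, so
`f(a) = f(a ∖ m) ∘_{u_a(m)+1} 2^m`. Induction on the length then gives `ψ = ε ∘ f`. -/

open List

namespace BT

theorem graft_node_of_le {l r S : BT} {i : ℕ} (h : i ≤ l.leaves) :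
    (node l r).graft i S = node (l.graft i S) r := by
  rw [graft, if_pos h]

theorem graft_node_leaves_add {l r S : BT} {j : ℕ} (hj : 0 < j) :
    (node l r).graft (l.leaves + j) S = node l (r.graft j S) := by
  rw [graft, if_neg (by omega), Nat.add_sub_cancel_left]

end BT

theorem length_filter_le_lt {l : List ℕ} {x y : ℕ} (hy : y ∈ l) (hxy : x < y) :
    (l.filter (· ≤ x)).length < (l.filter (· ≤ y)).length := by
  have hsub : (l.filter (· ≤ y)).filter (· ≤ x) = l.filter (· ≤ x) := by
    rw [filter_filter]
    exact filter_congr fun z _ => by simp; omega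
  rw [← hsub, length_filter_lt_length_iff_exists]
  exact ⟨y, by simpa using hy, by simpa using hxy⟩

theorem std_map_of_strictMonoOn {l : List ℕ} {g : ℕ → ℕ} (hg : StrictMonoOn g {x | x ∈ l}) :
    std (l.map g) = std l := by
  simp only [std, map_map, filter_map, length_map]
  refine map_congr_left fun x hx => congrArg length (filter_congr fun z hz => ?_)
  simpa using hg.le_iff_le hz hx

theorem lodayPsi_nil : lodayPsi [] = BT.leaf := by
  rw [lodayPsi]; rfl

theorem lodayPsi_of_maximum_eq {a : List ℕ} {M : ℕ} (hM : a.maximum = M) :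
    lodayPsi a = .node (lodayPsi (std (a.take (a.idxOf M))))
      (lodayPsi (std (a.drop (a.idxOf M + 1)))) := by
  rw [lodayPsi]
  split <;> rename_i h <;> rw [h] at hM <;> cases hM; rfl

theorem lodayPsi_append_cons_std {α β : List ℕ} {M : ℕ} (hα : ∀ x ∈ α, x < M)
    (hβ : ∀ x ∈ β, x < M) :
    lodayPsi (α ++ M :: β) = .node (lodayPsi (std α)) (lodayPsi (std β)) := by
  have hmax : (α ++ M :: β).maximum = M := by
    refine maximum_eq_coe_iff.2 ⟨by simp, fun x hx => ?_⟩
    rcases mem_append.1 hx with h | h | ⟨_, h⟩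
    exacts [(hα x h).le, le_rfl, (hβ x h).le]
  have hidx : (α ++ M :: β).idxOf M = α.length := by
    simp [idxOf_append, show M ∉ α from fun h => lt_irrefl M (hα M h)]
  rw [lodayPsi_of_maximum_eq hmax, hidx, take_left' rfl]
  simp

theorem lodayPsi_singleton (x : ℕ) : lodayPsi [x] = .node .leaf .leaf := by
  simpa [std, lodayPsi_nil] using
    lodayPsi_append_cons_std (α := []) (β := []) (M := x) (by simp) (by simp)

theorem exists_eq_append_max_cons {a : List ℕ} (hne : a ≠ []) (hnd : a.Nodup) :
    ∃ α M β, a = α ++ M :: β ∧ (∀ x ∈ α, x < M) ∧ ∀ x ∈ β, x < M := by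
  obtain ⟨M, hMa, hle⟩ : ∃ M ∈ a, ∀ x ∈ a, x ≤ M :=
    ⟨a.max hne, max_mem hne, fun _ => le_max_of_mem⟩
  obtain ⟨α, β, rfl⟩ := append_of_mem hMa
  have hM : M ∉ α ++ β := (nodup_cons.1 (nodup_middle.1 hnd)).1
  have hlt : ∀ x ∈ α ++ β, x < M := fun x hx =>
    (hle x (by rcases mem_append.1 hx with h | h <;> simp [h])).lt_of_ne fun h => hM (h ▸ hx)
  exact ⟨α, M, β, rfl, fun x hx => hlt x (by simp [hx]), fun x hx => hlt x (by simp [hx])⟩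

@[elab_as_elim]
theorem nodup_induction_on_max {P : List ℕ → Prop} (nil : P [])
    (append_cons : ∀ α M β, (α ++ M :: β).Nodup → (∀ x ∈ α, x < M) → (∀ x ∈ β, x < M) →
      P α → P β → P (α ++ M :: β)) :
    ∀ a : List ℕ, a.Nodup → P a
  | a, hnd => by
    rcases eq_or_ne a [] with rfl | hne
    · exact nil
    obtain ⟨α, M, β, rfl, hα, hβ⟩ := exists_eq_append_max_cons hne hnd
    exact append_cons α M β hnd hα hβ
      (nodup_induction_on_max nil append_cons α (hnd.sublist (by simp)))
      (nodup_induction_on_max nil append_cons β (hnd.sublist (by simp)))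
termination_by a => a.length

theorem lodayPsi_map_of_strictMonoOn {l : List ℕ} (hnd : l.Nodup) {g : ℕ → ℕ}
    (hg : StrictMonoOn g {x | x ∈ l}) : lodayPsi (l.map g) = lodayPsi l := by
  rcases eq_or_ne l [] with rfl | hne
  · rfl
  obtain ⟨α, M, β, rfl, hα, hβ⟩ := exists_eq_append_max_cons hne hnd
  have hgα : StrictMonoOn g {x | x ∈ α} := hg.mono fun x hx => by simp_all
  have hgβ : StrictMonoOn g {x | x ∈ β} := hg.mono fun x hx => by simp_all
  have hlt : ∀ l' ⊆ α ++ M :: β, (∀ x ∈ l', x < M) → ∀ y ∈ l'.map g, y < g M := by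
    simp only [mem_map]
    rintro l' hl' hlt _ ⟨x, hx, rfl⟩
    exact hg (hl' hx) (by simp) (hlt x hx)
  rw [map_append, map_cons, lodayPsi_append_cons_std (hlt α (by simp) hα) (hlt β (by simp) hβ),
    lodayPsi_append_cons_std hα hβ, std_map_of_strictMonoOn hgα, std_map_of_strictMonoOn hgβ]

theorem lodayPsi_std {l : List ℕ} (hnd : l.Nodup) : lodayPsi (std l) = lodayPsi l :=
  lodayPsi_map_of_strictMonoOn hnd fun _ _ _ hy hxy => length_filter_le_lt hy hxy

theorem lodayPsi_append_cons {α β : List ℕ} {M : ℕ} (hnd : (α ++ M :: β).Nodup)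
    (hα : ∀ x ∈ α, x < M) (hβ : ∀ x ∈ β, x < M) :
    lodayPsi (α ++ M :: β) = .node (lodayPsi α) (lodayPsi β) := by
  rw [lodayPsi_append_cons_std hα hβ, lodayPsi_std (hnd.sublist (by simp)),
    lodayPsi_std (hnd.sublist (by simp))]

theorem leaves_lodayPsi {a : List ℕ} (hnd : a.Nodup) : (lodayPsi a).leaves = a.length + 1 := by
  refine nodup_induction_on_max (by rw [lodayPsi_nil]; rfl)
    (fun α M β hnd hα hβ ihα ihβ => ?_) a hnd
  rw [lodayPsi_append_cons hnd hα hβ, BT.leaves, ihα, ihβ, length_append, length_cons]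
  omega

theorem uCount_cons_self (x : ℕ) (l : List ℕ) : uCount (x :: l) x = 0 := by
  simp [uCount]

theorem uCount_cons_of_ne {x y : ℕ} (l : List ℕ) (h : y ≠ x) :
    uCount (y :: l) x = uCount l x + if x < y then 1 else 0 := by
  by_cases hxy : x < y <;> simp [uCount, h, hxy]

theorem uCount_append_of_mem {l : List ℕ} {x : ℕ} (r : List ℕ) (h : x ∈ l) :
    uCount (l ++ r) x = uCount l x := by
  induction l with
  | nil => simp at h
  | cons y l ih =>
    by_cases hy : y = x
    · simp only [hy, cons_append, uCount_cons_self]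
    · rw [cons_append, uCount_cons_of_ne _ hy, uCount_cons_of_ne _ hy,
        ih ((mem_cons.1 h).resolve_left (Ne.symm hy))]

theorem uCount_append_of_forall_lt {l : List ℕ} {x : ℕ} (r : List ℕ) (h : ∀ y ∈ l, x < y) :
    uCount (l ++ r) x = l.length + uCount r x := by
  induction l with
  | nil => simp
  | cons y l ih =>
    have hxy := h y mem_cons_self
    rw [cons_append, uCount_cons_of_ne _ hxy.ne', if_pos hxy,
      ih fun z hz => h z (mem_cons_of_mem y hz), length_cons]
    omega

theorem uCount_lt_length {l : List ℕ} {x : ℕ} (h : x ∈ l) : uCount l x < l.length := by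
  induction l with
  | nil => simp at h
  | cons y l ih =>
    by_cases hy : y = x
    · simp [hy, uCount_cons_self]
    · rw [uCount_cons_of_ne _ hy, length_cons]
      have := ih ((mem_cons.1 h).resolve_left (Ne.symm hy))
      split <;> omega

theorem uCount_erase_of_lt {m x : ℕ} (a : List ℕ) (hmx : m < x) :
    uCount (a.erase m) x = uCount a x := by
  induction a with
  | nil => rfl
  | cons y a ih =>
    by_cases hym : y = m
    · rw [hym, erase_cons_head, uCount_cons_of_ne _ hmx.ne, if_neg (by omega), add_zero]
    rw [erase_cons_tail (by simpa using hym)]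
    by_cases hyx : y = x
    · rw [hyx, uCount_cons_self, uCount_cons_self]
    · rw [uCount_cons_of_ne _ hyx, uCount_cons_of_ne _ hyx, ih]

theorem lodayPsi_eq_graft_of_forall_le {a : List ℕ} (hnd : a.Nodup) {m : ℕ} (hm : m ∈ a)
    (hmin : ∀ x ∈ a, m ≤ x) :
    lodayPsi a = (lodayPsi (a.erase m)).graft (uCount a m + 1) (.node .leaf .leaf) := by
  revert hm hmin
  refine nodup_induction_on_max (by simp) (fun α M β hnd hα hβ ihα ihβ hm hmin => ?_) a hnd
  have hndα : α.Nodup := hnd.sublist (by simp)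
  have hndβ : β.Nodup := hnd.sublist (by simp)
  by_cases hmα : m ∈ α
  · have hsub : ∀ x ∈ α.erase m, x < M := fun x hx => hα x (mem_of_mem_erase hx)
    have hnd' : (α.erase m ++ M :: β).Nodup := erase_append_left _ hmα ▸ hnd.erase m
    have hlen := length_erase_of_mem hmα
    have hu := uCount_lt_length hmα
    rw [erase_append_left _ hmα, uCount_append_of_mem _ hmα, lodayPsi_append_cons hnd hα hβ,
      lodayPsi_append_cons hnd' hsub hβ, BT.graft_node_of_le,
      ← ihα hmα fun x hx => hmin x (by simp [hx])]
    rw [leaves_lodayPsi (hndα.erase m)]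
    omega
  have hmMβ : m ∈ M :: β := (mem_append.1 hm).resolve_left hmα
  have hαm : ∀ x ∈ α, m < x := fun x hx =>
    (hmin x (by simp [hx])).lt_of_ne fun h => hmα (h ▸ hx)
  rcases mem_cons.1 hmMβ with rfl | hmβ
  · obtain rfl : α = [] := eq_nil_iff_forall_not_mem.2 fun x hx =>
      (hα x hx).not_ge (hmin x (by simp [hx]))
    obtain rfl : β = [] := eq_nil_iff_forall_not_mem.2 fun x hx =>
      (hβ x hx).not_ge (hmin x (by simp [hx]))
    simp [lodayPsi_singleton, uCount_cons_self, lodayPsi_nil, BT.graft]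
  · have hnd' : (α ++ M :: β.erase m).Nodup := by
      rw [← erase_cons_tail (by simpa using (hβ m hmβ).ne'), ← erase_append_right _ hmα]
      exact hnd.erase m
    have hu : uCount (α ++ M :: β) m + 1 = (lodayPsi α).leaves + (uCount β m + 1) := by
      rw [leaves_lodayPsi hndα, append_cons, uCount_append_of_forall_lt, length_append,
        length_singleton, add_assoc]
      simpa [or_imp, forall_and] using ⟨hαm, hβ m hmβ⟩
    rw [erase_append_right _ hmα, erase_cons_tail (by simpa using (hβ m hmβ).ne'), hu,
      lodayPsi_append_cons hnd hα hβ,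
      lodayPsi_append_cons hnd' hα fun x hx => hβ x (mem_of_mem_erase hx),
      BT.graft_node_leaves_add (by omega), ← ihβ hmβ fun x hx => hmin x (by simp [hx])]

theorem sortDesc_perm (a : List ℕ) : sortDesc a ~ a :=
  (reverse_perm _).trans (mergeSort_perm a _)

theorem pairwise_sortDesc (a : List ℕ) : (sortDesc a).Pairwise (· ≥ ·) := by
  rw [sortDesc, pairwise_reverse]
  exact pairwise_mergeSort' (· ≤ ·) a

theorem sortDesc_eq_of_perm_of_pairwise {a b : List ℕ} (hp : b ~ a) (hs : b.Pairwise (· ≥ ·)) :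
    sortDesc a = b :=
  ((sortDesc_perm a).trans hp.symm).eq_of_pairwise (fun _ _ _ _ h h' => le_antisymm h' h)
    (pairwise_sortDesc a) hs

theorem sortDesc_of_forall_le {a : List ℕ} {m : ℕ} (hm : m ∈ a) (hmin : ∀ x ∈ a, m ≤ x) :
    sortDesc a = sortDesc (a.erase m) ++ [m] := by
  refine sortDesc_eq_of_perm_of_pairwise ?_ ?_
  · exact ((sortDesc_perm _).append_right _).trans
      (perm_append_singleton _ _ |>.trans (perm_cons_erase hm).symm)
  · refine pairwise_append.2 ⟨pairwise_sortDesc _, pairwise_singleton _ _, fun x hx y hy => ?_⟩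
    rw [mem_singleton.1 hy]
    exact hmin x (mem_of_mem_erase ((sortDesc_perm _).subset hx))

theorem fWord_of_sortDesc_eq_cons {a rest : List ℕ} {k : ℕ} (h : sortDesc a = k :: rest) :
    fWord a = rest.foldl (fun A x => .comp A (uCount a x + 1) (.gen x)) (.gen k) := by
  rw [fWord, h]

theorem fWord_singleton (x : ℕ) : fWord [x] = .gen x :=
  fWord_of_sortDesc_eq_cons (rest := []) (sortDesc_eq_of_perm_of_pairwise (.refl _) (by simp))

theorem fWord_eq_comp_of_forall_le {a : List ℕ} (hnd : a.Nodup) {m : ℕ} (hm : m ∈ a)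
    (hmin : ∀ x ∈ a, m ≤ x) (hlen : 2 ≤ a.length) :
    fWord a = .comp (fWord (a.erase m)) (uCount a m + 1) (.gen m) := by
  obtain ⟨k, rest, hk⟩ : ∃ k rest, sortDesc (a.erase m) = k :: rest := by
    refine exists_cons_of_ne_nil fun h => ?_
    have := (sortDesc_perm (a.erase m)).length_eq
    rw [h, length_erase_of_mem hm, length_nil] at this
    omega
  have hsd : sortDesc a = k :: (rest ++ [m]) := by
    rw [sortDesc_of_forall_le hm hmin, hk, cons_append]
  rw [fWord_of_sortDesc_eq_cons hsd, fWord_of_sortDesc_eq_cons hk, foldl_append, foldl_cons,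
    foldl_nil]
  refine congrArg (Trm.comp · _ _) (foldl_ext _ _ _ fun A x hx => ?_)
  have hxa : x ∈ a.erase m := (sortDesc_perm _).subset (by simp [hk, hx])
  have hmx : m < x :=
    (hmin x (mem_of_mem_erase hxa)).lt_of_ne (hnd.mem_erase_iff.1 hxa).1.symm
  rw [uCount_erase_of_lt a hmx]

theorem lodayPsi_eq_eval_fWord {a : List ℕ} (hnd : a.Nodup) (hne : a ≠ []) :
    lodayPsi a = (fWord a).eval := by
  obtain ⟨x, rfl⟩ | hlen : (∃ x, a = [x]) ∨ 2 ≤ a.length := by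
    rcases a with _ | ⟨x, _ | _⟩ <;> simp_all
  · rw [lodayPsi_singleton, fWord_singleton]
    rfl
  obtain ⟨m, hm, hmin⟩ : ∃ m ∈ a, ∀ x ∈ a, m ≤ x :=
    ⟨a.min hne, min_mem hne, fun _ => min_le_of_mem⟩
  have hlen' := length_erase_of_mem hm
  rw [lodayPsi_eq_graft_of_forall_le hnd hm hmin, fWord_eq_comp_of_forall_le hnd hm hmin hlen,
    lodayPsi_eq_eval_fWord (hnd.erase m) (ne_nil_of_length_pos (by omega))]
  rfl
termination_by a.length
decreasing_by omega

theorem lodayPsi_via_f (n : ℕ) (hn : 1 ≤ n) (π : List ℕ)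
    (hperm : π.Perm (List.range' 1 n)) :
    lodayPsi π = (fWord π).eval := by
  refine lodayPsi_eq_eval_fWord (hperm.nodup_iff.2 nodup_range') fun h => ?_
  have := hperm.length_eq
  simp only [h, length_nil, length_range'] at this
  omega
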